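/- Let T be a noetherian triangulated category with a t-structure (T^{≤0}, T^{≥0}) in the preferred equivalence class, witnessing integer N. Then for every object H ∈ T^-_c and every integer m ≥ 0, there exists an object G ∈ T^b_c such that H^⊥ ⊇ T^{≥ −m} ∩ G^⊥ (perpendiculars computed in T). -/

import Mathlib

/-!
Shift `H` down by `m + 1` and split it with the noetherian triangle `A ⟶ H⟦-(m+1)⟧ ⟶ B`. Shifting
back gives a triangle `A⟦m+1⟧ ⟶ H ⟶ G` with `G := B⟦m+1⟧ ∈ T^b_c` and `A⟦m+1⟧ ∈ T^{≤ -m-1}`, which has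
no maps to `T^{≥ -m}`. So every object of `T^{≥ -m}` orthogonal to `G` is orthogonal to both ends
of the triangle, hence to `H`.
-/

namespace Stmt12

open CategoryTheory Category Limits Pretriangulated ZeroObject

universe v u

variable {T : Type u} [Category.{v} T] [Preadditive T] [HasZeroObject T]
  [HasShift T ℤ] [∀ n : ℤ, (CategoryTheory.shiftFunctor T n).Additive] [Pretriangulated T]
  [HasCoproducts.{v} T]

/-- The canonical map `⨁ᵢ Hom(X, fᵢ) ⟶ Hom(X, ∐ f)`. -/
noncomputable def canMap {ι : Type v} [DecidableEq ι] (f : ι → T) (X : T) :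
    (DirectSum ι fun i : ι => (X ⟶ f i)) →+ (X ⟶ ∐ f) :=
  DirectSum.toAddMonoid fun i =>
    AddMonoidHom.mk' (fun (h : X ⟶ f i) => h ≫ Sigma.ι f i)
      (fun _ _ => Preadditive.add_comp _ _ _ _ _ _)

/-- An object `X` is compact if `Hom(X, −)` commutes with coproducts. -/
def IsCompactObject (X : T) : Prop :=
  ∀ {ι : Type v} [DecidableEq ι] (f : ι → T), Function.Bijective (canMap f X)

/-- `G` generates `T`: an object with no nonzero maps from any shift of `G` is zero. -/
def IsGenerator (G : T) : Prop :=
  ∀ X : T, (∀ n : ℤ, ∀ f : G⟦n⟧ ⟶ X, f = 0) → IsZero X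

/-- A t-structure on `T`, given by the sequences of subcategories
`le n = T^{≤ n}` and `ge n = T^{≥ n}`. -/
structure TStruct (T : Type u) [Category.{v} T] [Preadditive T] [HasZeroObject T]
    [HasShift T ℤ] [∀ n : ℤ, (CategoryTheory.shiftFunctor T n).Additive]
    [Pretriangulated T] where
  le : ℤ → Set T
  ge : ℤ → Set T
  le_iso : ∀ n, ∀ X Y : T, (X ≅ Y) → X ∈ le n → Y ∈ le n
  ge_iso : ∀ n, ∀ X Y : T, (X ≅ Y) → X ∈ ge n → Y ∈ ge n
  le_shift : ∀ (n : ℤ) (X : T), X ∈ le n ↔ X⟦(1 : ℤ)⟧ ∈ le (n - 1)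
  ge_shift : ∀ (n : ℤ) (X : T), X ∈ ge n ↔ X⟦(1 : ℤ)⟧ ∈ ge (n - 1)
  le_mono : ∀ n : ℤ, le n ⊆ le (n + 1)
  ge_anti : ∀ n : ℤ, ge (n + 1) ⊆ ge n
  hom_zero : ∀ X ∈ le 0, ∀ Y ∈ ge 1, ∀ f : X ⟶ Y, f = 0
  exists_triangle : ∀ X : T, ∃ (A B : T) (f : A ⟶ X) (g : X ⟶ B) (h : B ⟶ A⟦(1 : ℤ)⟧),
    A ∈ le 0 ∧ B ∈ ge 1 ∧ Triangle.mk f g h ∈ (distTriang T)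

/-- A cocomplete pre-aisle: closed under isomorphisms, zero, suspension, extensions,
direct summands and small coproducts. -/
def IsCocompletePreAisle (P : Set T) : Prop :=
  (∀ X Y : T, (X ≅ Y) → X ∈ P → Y ∈ P) ∧ ((0 : T) ∈ P) ∧
  (∀ X ∈ P, X⟦(1 : ℤ)⟧ ∈ P) ∧
  (∀ Tr ∈ (distTriang T), Tr.obj₁ ∈ P → Tr.obj₃ ∈ P → Tr.obj₂ ∈ P) ∧
  (∀ (X Y : T) (r : X ⟶ Y) (s : Y ⟶ X), s ≫ r = 𝟙 Y → X ∈ P → Y ∈ P) ∧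
  (∀ {ι : Type v} (f : ι → T), (∀ i, f i ∈ P) → (∐ f) ∈ P)

/-- `overline{⟨G⟩}^{(−∞,−n]}`: the smallest cocomplete pre-aisle containing `G⟦m⟧` for
all `m ≥ n`. -/
def aisleGen (G : T) (n : ℤ) : Set T :=
  ⋂₀ {P | IsCocompletePreAisle P ∧ ∀ m : ℤ, n ≤ m → G⟦m⟧ ∈ P}

/-- A t-structure is in the preferred equivalence class if it is equivalent to the
t-structure generated by a compact generator `G`, i.e. there is `A > 0` with
`⟨G⟩-aisle shifted by A ⊆ T^{≤0} ⊆ ⟨G⟩-aisle shifted by −A`. -/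
def InPreferredClass (t : TStruct T) : Prop :=
  ∃ G : T, IsCompactObject G ∧ IsGenerator G ∧
    ∃ A : ℤ, 0 < A ∧ aisleGen G A ⊆ t.le 0 ∧ t.le 0 ⊆ aisleGen G (-A)

/-- The subcategory `T^-_c`: objects admitting, for every `n`, a triangle
`E ⟶ X ⟶ D` with `E` compact and `D ∈ T^{≤ n}`. -/
def Tminus (t : TStruct T) : Set T :=
  {X | ∀ n : ℤ, ∃ (E D : T) (f : E ⟶ X) (g : X ⟶ D) (h : D ⟶ E⟦(1 : ℤ)⟧),
    IsCompactObject E ∧ D ∈ t.le n ∧ Triangle.mk f g h ∈ (distTriang T)}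

/-- The subcategory `T^b_c = T^-_c ∩ T^b`. -/
def Tbc (t : TStruct T) : Set T :=
  Tminus t ∩ {X | ∃ m : ℤ, X ∈ t.ge m}

/-- `T` is noetherian with witness `N` (relative to the t-structure `t`): every
`X ∈ T^-_c` admits a triangle `A ⟶ X ⟶ B` with `A ∈ T^-_c ∩ T^{≤0}` and
`B ∈ T^b_c ∩ T^{≥ −N}`. -/
def NoetherianWitness (t : TStruct T) (N : ℕ) : Prop :=
  ∀ X ∈ Tminus t, ∃ (A B : T) (f : A ⟶ X) (g : X ⟶ B) (h : B ⟶ A⟦(1 : ℤ)⟧),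
    A ∈ Tminus t ∩ t.le 0 ∧ B ∈ Tbc t ∩ t.ge (-(N : ℤ)) ∧
    Triangle.mk f g h ∈ (distTriang T)

/-- `T` is weakly approximable (relative to the t-structure `t`). -/
def WeaklyApproximable (t : TStruct T) : Prop :=
  ∃ (G : T) (A : ℕ), 0 < A ∧ IsCompactObject G ∧ IsGenerator G ∧
    G ∈ t.le (A : ℤ) ∧ (∀ X ∈ t.le (-(A : ℤ)), ∀ f : G ⟶ X, f = 0) ∧
    ∀ X ∈ t.le 0, ∃ (E D : T) (f : E ⟶ X) (g : X ⟶ D) (h : D ⟶ E⟦(1 : ℤ)⟧),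
      E ∈ aisleGen G (-(A : ℤ)) ∧ D ∈ t.le (-1) ∧
      Triangle.mk f g h ∈ (distTriang T)


lemma shift_mem_iff_of_shift_one_mem_iff {C : Type*} [Category C] [HasShift C ℤ] (S : ℤ → Set C)
    (hiso : ∀ n, ∀ X Y : C, (X ≅ Y) → X ∈ S n → Y ∈ S n)
    (hsh : ∀ (n : ℤ) (X : C), X ∈ S n ↔ X⟦(1 : ℤ)⟧ ∈ S (n - 1)) (k : ℤ) :
    ∀ n (X : C), X ∈ S n ↔ X⟦k⟧ ∈ S (n - k) := by
  have hiso' : ∀ n, ∀ X Y : C, (X ≅ Y) → (X ∈ S n ↔ Y ∈ S n) :=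
    fun n X Y e => ⟨hiso n X Y e, hiso n Y X e.symm⟩
  induction k using Int.induction_on with
  | zero => intro n X; simpa using hiso' n X _ ((shiftFunctorZero C ℤ).symm.app X)
  | succ k ih =>
    intro n X
    rw [ih n X, hsh, sub_sub]
    exact hiso' _ _ _ ((shiftFunctorAdd' C (k : ℤ) 1 (k + 1) rfl).app X).symm
  | pred k ih =>
    intro n X
    rw [ih n X, hsh (n - (-(k : ℤ) - 1)), sub_sub, sub_add_cancel]
    exact hiso' _ _ _ ((shiftFunctorAdd' C (-(k : ℤ) - 1) 1 (-k) (by ring)).app X)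

section

variable {C : Type u} [Category.{v} C] [Preadditive C]

section Shift

variable [HasShift C ℤ] [∀ n : ℤ, (shiftFunctor C n).Additive]

def shiftHomAddEquiv (k : ℤ) (X Y : C) : (X ⟶ Y⟦-k⟧) ≃+ (X⟦k⟧ ⟶ Y) :=
  AddEquiv.mk' ((shiftEquiv C k).toAdjunction.homEquiv X Y).symm fun u v => by
    have h := (shiftEquiv C k).toAdjunction.homEquiv_counit (X := X) (Y := Y)
    erw [h, h, h, (shiftFunctor C k).map_add, Preadditive.add_comp]
    rfl

lemma shiftHomAddEquiv_comp_shift_map (k : ℤ) {X Y Y' : C} (u : X ⟶ Y⟦-k⟧) (g : Y ⟶ Y') :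
    shiftHomAddEquiv k X Y' (u ≫ g⟦-k⟧') = shiftHomAddEquiv k X Y u ≫ g :=
  (shiftEquiv C k).toAdjunction.homEquiv_naturality_right_symm u g

variable [HasZeroObject C] [Pretriangulated C]

namespace TStruct

variable (t : TStruct C)

lemma le_shift_iff (k n : ℤ) (X : C) : X ∈ t.le n ↔ X⟦k⟧ ∈ t.le (n - k) :=
  shift_mem_iff_of_shift_one_mem_iff t.le t.le_iso t.le_shift k n X

lemma ge_shift_iff (k n : ℤ) (X : C) : X ∈ t.ge n ↔ X⟦k⟧ ∈ t.ge (n - k) :=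
  shift_mem_iff_of_shift_one_mem_iff t.ge t.ge_iso t.ge_shift k n X

lemma ge_antitone : Antitone t.ge :=
  antitone_int_of_succ_le t.ge_anti

lemma hom_eq_zero_of_mem_le_of_mem_ge {a b : ℤ} (hab : a < b) {X Y : C} (hX : X ∈ t.le a)
    (hY : Y ∈ t.ge b) (f : X ⟶ Y) : f = 0 := by
  have hX' : X⟦a⟧ ∈ t.le 0 := by simpa using (t.le_shift_iff a a X).1 hX
  have hY' : Y⟦a⟧ ∈ t.ge 1 := t.ge_antitone (by omega) ((t.ge_shift_iff a b Y).1 hY)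
  exact (shiftFunctor C a).map_injective (by simpa using t.hom_zero _ hX' _ hY' (f⟦a⟧'))

end TStruct

lemma hom_obj₂_eq_zero_of_distinguished {Tr : Triangle C} (hTr : Tr ∈ distTriang C) {X : C}
    (h₁ : ∀ u : Tr.obj₁ ⟶ X, u = 0) (h₃ : ∀ u : Tr.obj₃ ⟶ X, u = 0) (u : Tr.obj₂ ⟶ X) :
    u = 0 := by
  obtain ⟨w, rfl⟩ := Triangle.yoneda_exact₂ Tr hTr u (h₁ _)
  rw [h₃ w, comp_zero]

end Shift

variable [HasCoproducts.{v} C]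

lemma canMap_of {ι : Type v} [DecidableEq ι] (f : ι → C) (X : C) (i : ι) (u : X ⟶ f i) :
    canMap f X (DirectSum.of _ i u) = u ≫ Sigma.ι f i := by
  simp [canMap, DirectSum.toAddMonoid_of]

lemma bijective_canMap_of_ladder {ι : Type v} [DecidableEq ι] {X Y : C} {f g : ι → C}
    (e : ∀ i, (X ⟶ f i) ≃+ (Y ⟶ g i)) (E : (X ⟶ ∐ f) →+ (Y ⟶ ∐ g)) (hE : Function.Bijective E)
    (he : ∀ i (u : X ⟶ f i), E (u ≫ Sigma.ι f i) = e i u ≫ Sigma.ι g i)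
    (hX : Function.Bijective (canMap f X)) : Function.Bijective (canMap g Y) := by
  have hcomm : (canMap g Y).comp (DFinsupp.mapRange.addEquiv e).toAddMonoidHom =
      E.comp (canMap f X) := by
    refine DirectSum.addHom_ext fun i u => ?_
    change canMap g Y (DFinsupp.mapRange (fun i x => e i x) (fun i => (e i).map_zero)
      (DFinsupp.single (β := fun i => X ⟶ f i) i u)) =
      E (canMap f X (.of _ i u))
    rw [DFinsupp.mapRange_single]
    exact (canMap_of g Y i _).trans (by rw [canMap_of, he])
  rw [← (DFinsupp.mapRange.addEquiv e).bijective.of_comp_iff]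
  have := congrArg DFunLike.coe hcomm
  simp only [AddMonoidHom.coe_comp] at this
  exact this ▸ hE.comp hX

lemma IsCompactObject.shift [HasShift C ℤ] [∀ n : ℤ, (shiftFunctor C n).Additive] {X : C}
    (hX : IsCompactObject X) (k : ℤ) : IsCompactObject (X⟦k⟧) := by
  intro ι _ f
  -- `Hom(X⟦k⟧, -) ≃ Hom(X, -⟦-k⟧)`, and `S` identifies `(∐ f)⟦-k⟧` with `∐ (f i)⟦-k⟧`.
  let S := sigmaComparison (shiftFunctor C (-k)) f
  refine bijective_canMap_of_ladder (fun i => shiftHomAddEquiv k X (f i))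
    ((shiftHomAddEquiv k X (∐ f)).toAddMonoidHom.comp (Preadditive.rightComp X S)) ?_ ?_
    (hX fun i => (f i)⟦-k⟧)
  · exact (shiftHomAddEquiv k X (∐ f)).bijective.comp
      ⟨fun _ _ h => (cancel_mono S).1 h, fun w => ⟨w ≫ inv S, by simp [Preadditive.rightComp]⟩⟩
  · intro i u
    simp only [AddMonoidHom.comp_apply, AddEquiv.coe_toAddMonoidHom, Preadditive.rightComp,
      AddMonoidHom.mk'_apply, assoc, S, ι_comp_sigmaComparison]
    exact shiftHomAddEquiv_comp_shift_map k u (Sigma.ι f i)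

end

variable {t : TStruct T}

lemma shift_mem_Tminus {X : T} (hX : X ∈ Tminus t) (k : ℤ) : X⟦k⟧ ∈ Tminus t := by
  intro n
  obtain ⟨E, D, f, g, h, hE, hD, hTr⟩ := hX (n + k)
  refine ⟨E⟦k⟧, D⟦k⟧, _, _, _, hE.shift k, ?_, Triangle.shift_distinguished _ hTr k⟩
  simpa using (t.le_shift_iff k (n + k) D).1 hD

lemma shift_mem_Tbc {X : T} (hX : X ∈ Tbc t) (k : ℤ) : X⟦k⟧ ∈ Tbc t := by
  obtain ⟨hX, r, hr⟩ := hX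
  exact ⟨shift_mem_Tminus hX k, r - k, (t.ge_shift_iff k r X).1 hr⟩

theorem statement12 (t : TStruct T)
    (N : ℕ) (hnoeth : NoetherianWitness t N)
    (H : T) (hH : H ∈ Tminus t) (m : ℕ) :
    ∃ G ∈ Tbc t, ∀ X : T, X ∈ t.ge (-(m : ℤ)) →
      (∀ f : G ⟶ X, f = 0) → ∀ f : H ⟶ X, f = 0 := by
  obtain ⟨A, B, f, g, h, ⟨-, hA⟩, ⟨hB, -⟩, hTr⟩ := hnoeth _ (shift_mem_Tminus hH (-(m + 1)))
  refine ⟨B⟦(m + 1 : ℤ)⟧, shift_mem_Tbc hB _, fun X hX hBX v => ?_⟩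
  have hA' : A⟦(m + 1 : ℤ)⟧ ∈ t.le (-(m + 1)) := by simpa using (t.le_shift_iff (m + 1) 0 A).1 hA
  have hperp := hom_obj₂_eq_zero_of_distinguished (Triangle.shift_distinguished _ hTr (m + 1))
    (t.hom_eq_zero_of_mem_le_of_mem_ge (by omega) hA' hX) hBX
  let e : (H⟦(-(m + 1) : ℤ)⟧)⟦(m + 1 : ℤ)⟧ ≅ H := (shiftEquiv T (m + 1 : ℤ)).counitIso.app H
  rw [← cancel_epi e.hom, comp_zero]
  exact hperp _

end Stmt12
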